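/- A generalized co-symplectic manifold M is quasi-Sasakian (i.e. the cyclic sum (D_X 'F)(Y,Z) + (D_Y 'F)(Z,X) + (D_Z 'F)(X,Y) vanishes for all X, Y, Z) if (B̃_X 'F)(Y,T) = (B̃_Y 'F)(X,T) for all vector fields X, Y, where B̃ is the semi-symmetric non-metric connection. -/
import Mathlib


/-- An almost contact metric manifold together with its Riemannian (Levi-Civita)
connection, modelled algebraically: `R` is the ring of smooth functions, `V` the
module of vector fields, `act X f` is the derivative `X f` of a function along a
vector field, `bracket` the Lie bracket, `g` the Riemannian metric, `F` the
`(1,1)`-tensor, `T` the structure vector field, `A` the structure 1-form, and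
`D` the Levi-Civita connection. -/
structure ACM (R : Type*) [CommRing R] (V : Type*) [AddCommGroup V] [Module R V] where
  /-- action of vector fields on functions, `X f` -/
  act : V → R → R
  /-- Lie bracket of vector fields -/
  bracket : V → V → V
  /-- the Riemannian metric -/
  g : V → V → R
  /-- the `(1,1)`-tensor field `F`, `X̄ = F X` -/
  F : V → V
  /-- the structure vector field `T` -/
  T : V
  /-- the structure 1-form `A` -/
  A : V → R
  /-- the Riemannian (Levi-Civita) connection `D` -/
  D : V → V → V
  act_add : ∀ X (f h : R), act X (f + h) = act X f + act X h
  act_mul : ∀ X (f h : R), act X (f * h) = act X f * h + f * act X h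
  g_add_left : ∀ X Y Z, g (X + Y) Z = g X Z + g Y Z
  g_smul_left : ∀ (f : R) X Y, g (f • X) Y = f * g X Y
  g_symm : ∀ X Y, g X Y = g Y X
  F_add : ∀ X Y, F (X + Y) = F X + F Y
  F_smul : ∀ (f : R) X, F (f • X) = f • F X
  A_add : ∀ X Y, A (X + Y) = A X + A Y
  A_smul : ∀ (f : R) X, A (f • X) = f * A X
  /-- `F(F X) = -X + A(X) T` -/
  FF : ∀ X, F (F X) = -X + A X • T
  /-- `A(F X) = 0` -/
  A_F : ∀ X, A (F X) = 0
  /-- `g(F X, F Y) = g(X, Y) - A(X) A(Y)` -/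
  gFF : ∀ X Y, g (F X) (F Y) = g X Y - A X * A Y
  /-- `A(X) = g(X, T)` -/
  A_eq : ∀ X, A X = g X T
  D_add_left : ∀ X Y Z, D (X + Y) Z = D X Z + D Y Z
  D_smul_left : ∀ (f : R) X Y, D (f • X) Y = f • D X Y
  D_add_right : ∀ X Y Z, D X (Y + Z) = D X Y + D X Z
  D_leibniz : ∀ X (f : R) Y, D X (f • Y) = act X f • Y + f • D X Y
  /-- `D` is torsion-free -/
  torsion_free : ∀ X Y, D X Y - D Y X = bracket X Y
  /-- `D` is a metric connection -/
  metricity : ∀ X Y Z, act X (g Y Z) = g (D X Y) Z + g Y (D X Z)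

namespace ACM

variable {R : Type*} [CommRing R] {V : Type*} [AddCommGroup V] [Module R V] (M : ACM R V)

/-- the fundamental 2-form `'F(X,Y) = g(F X, Y)` -/
def pF (X Y : V) : R := M.g (M.F X) Y

/-- the semi-symmetric non-metric connection `B̃_X Y = D_X Y + 'F(X,Y) T` -/
def B (X Y : V) : V := M.D X Y + M.pF X Y • M.T

/-- the torsion tensor of `B̃`: `S̃(X,Y) = B̃_X Y - B̃_Y X - [X,Y]` -/
def S (X Y : V) : V := M.B X Y - M.B Y X - M.bracket X Y

/-- `(D_X A)(Y) = X(A(Y)) - A(D_X Y)` -/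
def DA (X Y : V) : R := M.act X (M.A Y) - M.A (M.D X Y)

/-- `(B̃_X A)(Y) = X(A(Y)) - A(B̃_X Y)` -/
def BA (X Y : V) : R := M.act X (M.A Y) - M.A (M.B X Y)

/-- `(D_X 'F)(Y,Z) = X('F(Y,Z)) - 'F(D_X Y, Z) - 'F(Y, D_X Z)` -/
def DpF (X Y Z : V) : R := M.act X (M.pF Y Z) - M.pF (M.D X Y) Z - M.pF Y (M.D X Z)

/-- `(B̃_X 'F)(Y,Z) = X('F(Y,Z)) - 'F(B̃_X Y, Z) - 'F(Y, B̃_X Z)` -/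
def BpF (X Y Z : V) : R := M.act X (M.pF Y Z) - M.pF (M.B X Y) Z - M.pF Y (M.B X Z)

/-- `(D_X F)(Y) = D_X (F Y) - F (D_X Y)` -/
def DF (X Y : V) : V := M.D X (M.F Y) - M.F (M.D X Y)

/-- `(B̃_X F)(Y) = B̃_X (F Y) - F (B̃_X Y)` -/
def BF (X Y : V) : V := M.B X (M.F Y) - M.F (M.B X Y)

/-- `(D_X w)(Y) = X(w(Y)) - w(D_X Y)` for a 1-form `w` -/
def Dw (w : V → R) (X Y : V) : R := M.act X (w Y) - w (M.D X Y)

/-- `(B̃_X w)(Y) = X(w(Y)) - w(B̃_X Y)` for a 1-form `w` -/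
def Bw (w : V → R) (X Y : V) : R := M.act X (w Y) - w (M.B X Y)

/-- `(B̃_X g)(Y,Z) = X(g(Y,Z)) - g(B̃_X Y, Z) - g(Y, B̃_X Z)` -/
def Bg (X Y Z : V) : R := M.act X (M.g Y Z) - M.g (M.B X Y) Z - M.g Y (M.B X Z)

/-- the manifold is of the first class with respect to the Riemannian connection `D` -/
def FirstClassD : Prop :=
  (∀ X Y : V, M.DA X (M.F Y) = -(M.DA (M.F X) Y)) ∧
  (∀ X Y : V, M.DA X (M.F Y) = M.DA Y (M.F X)) ∧
  (∀ Y : V, M.DF M.T Y = 0)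

/-- the manifold is of the first class with respect to `B̃` -/
def FirstClassB : Prop :=
  (∀ X Y : V, M.BA X (M.F Y) = -(M.BA (M.F X) Y)) ∧
  (∀ X Y : V, M.BA X (M.F Y) = M.BA Y (M.F X)) ∧
  (∀ Y : V, M.BF M.T Y = 0)

/-- generalized co-symplectic manifold -/
def GenCosymplectic : Prop :=
  ∀ X Y Z : V, M.DpF X Y Z = M.A Y * M.DA X (M.F Z) - M.A Z * M.DA X (M.F Y)

/-- generalized quasi-Sasakian manifold -/
def GenQuasiSasakian : Prop :=
  ∀ X Y Z : V,
    M.DpF X Y Z + M.DpF Y Z X + M.DpF Z X Y =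
      M.A X * (M.DA Y (M.F Z) - M.DA Z (M.F Y)) +
      M.A Y * (M.DA Z (M.F X) - M.DA X (M.F Z)) +
      M.A Z * (M.DA X (M.F Y) - M.DA Y (M.F X))

/-- the Nijenhuis tensor on a generalized co-symplectic manifold -/
def N (X Y Z : V) : R :=
  M.DpF (M.F X) Y Z - M.DpF (M.F Y) X Z + M.DpF X Y (M.F Z) - M.DpF Y X (M.F Z)

/-- `d'F(X,Y,Z)`, the exterior differential of the fundamental 2-form -/
def dpF (X Y Z : V) : R := M.DpF X Y Z + M.DpF Y Z X + M.DpF Z X Y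

/-- a 1-form `w` is covariant almost analytic with respect to `D` -/
def CovAlmostAnalyticD (w : V → R) : Prop :=
  ∀ X Y : V, w (M.DF X Y - M.DF Y X) = M.Dw w (M.F X) Y - M.Dw w X (M.F Y)

/-- a 1-form `w` is covariant almost analytic with respect to `B̃` -/
def CovAlmostAnalyticB (w : V → R) : Prop :=
  ∀ X Y : V, w (M.BF X Y - M.BF Y X) = M.Bw w (M.F X) Y - M.Bw w X (M.F Y)

end ACM

section Aux
variable {R : Type*} [CommRing R] {V : Type*} [AddCommGroup V] [Module R V] (M : ACM R V)

lemma act_zero (X : V) : M.act X 0 = 0 := by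
  have := M.act_add X 0 0; simpa using this.symm

lemma g_add_right (X Y Z : V) : M.g X (Y + Z) = M.g X Y + M.g X Z := by
  rw [M.g_symm, M.g_add_left, M.g_symm Y X, M.g_symm Z X]

lemma g_smul_right (f : R) (X Y : V) : M.g X (f • Y) = f * M.g X Y := by
  rw [M.g_symm, M.g_smul_left, M.g_symm]

lemma pF_T (U : V) : M.pF U M.T = 0 := by
  rw [ACM.pF, ← M.A_eq, M.A_F]

lemma BpF_T (X Y : V) : M.BpF X Y M.T = -(M.DA X (M.F Y)) := by
  have hm := M.metricity X (M.F Y) M.T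
  rw [← M.A_eq, M.A_F, act_zero] at hm
  simp only [ACM.BpF, ACM.B, ACM.DA, ACM.pF, ← M.A_eq, M.A_F, act_zero,
    g_add_right, g_smul_right, ← M.A_eq (M.F Y)]
  rw [M.A_eq (M.D X (M.F Y))]
  linear_combination hm

end Aux

/-- A generalized co-symplectic manifold is quasi-Sasakian (the cyclic
sum `(D_X 'F)(Y,Z) + (D_Y 'F)(Z,X) + (D_Z 'F)(X,Y)` vanishes) if
`(B̃_X 'F)(Y,T) = (B̃_Y 'F)(X,T)` for all vector fields `X, Y`. -/
theorem genCosymplectic_quasiSasakian_of_BpF_symmetry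
    {R : Type*} [CommRing R] {V : Type*} [AddCommGroup V] [Module R V] (M : ACM R V)
    (hgc : M.GenCosymplectic)
    (hsym : ∀ X Y : V, M.BpF X Y M.T = M.BpF Y X M.T) :
    ∀ X Y Z : V, M.DpF X Y Z + M.DpF Y Z X + M.DpF Z X Y = 0 := by
  intro X Y Z
  have hDA : ∀ U W : V, M.DA U (M.F W) = M.DA W (M.F U) := by
    intro U W
    have := hsym U W
    rw [BpF_T, BpF_T] at this
    exact neg_injective this
  rw [hgc X Y Z, hgc Y Z X, hgc Z X Y, hDA X Z, hDA Y X, hDA Z Y]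
  ring
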